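/- For every integer n ≥ 1, consider the CAPR instance with lexicographic preferences having applicants a_1,…,a_n, each of capacity n, and courses c_1,…,c_{2n}, each of capacity 1; every applicant's preference list is c_1, c_2, …, c_{2n} (all courses in increasing indicial order); the prerequisites, identical for all applicants, are the strict partial order generated by the chain c_1 → c_2 → … → c_{2n}. Then this instance has exactly n Pareto optimal matchings, namely for each i (1 ≤ i ≤ n) the matching M_i = {(a_i, c_j) : n+1 ≤ j ≤ 2n}, in which a_i is assigned the bundle {c_{n+1}, c_{n+2}, …, c_{2n}} and no course is assigned to any other applicant. -/

import Mathlib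

open Finset

def bundle {A C : Type*} [DecidableEq A] [DecidableEq C]
    (M : Finset (A × C)) (a : A) : Finset C :=
  (M.filter fun p => p.1 = a).image Prod.snd

def slots {A C : Type*} [DecidableEq C] (M : Finset (A × C)) (c : C) : ℕ :=
  (M.filter fun p => p.2 = c).card

/-- Lexicographic comparison of bundles w.r.t. a preference list (earlier = better). -/
def lexPrefers {C : Type*} [DecidableEq C] (l : List C) (S₁ S₂ : Finset C) : Prop :=
  ∃ c ∈ S₁ \ S₂, ∀ d ∈ (S₁ \ S₂) ∪ (S₂ \ S₁), l.idxOf c ≤ l.idxOf d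

def IsFeasible {A C : Type*} (pref : A → List C) (qA : A → ℕ)
    (prereq : A → C → C → Prop) (a : A) (S : Finset C) : Prop :=
  (∀ c ∈ S, c ∈ pref a) ∧ S.card ≤ qA a ∧
    ∀ c ∈ S, ∀ c', prereq a c c' → c' ∈ S

def IsMatching {A C : Type*} [DecidableEq A] [DecidableEq C]
    (pref : A → List C) (qA : A → ℕ) (qC : C → ℕ)
    (prereq : A → C → C → Prop) (M : Finset (A × C)) : Prop :=
  (∀ a, IsFeasible pref qA prereq a (bundle M a)) ∧ ∀ c, slots M c ≤ qC c

def Dominates {A C : Type*} [DecidableEq A] [DecidableEq C]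
    (pref : A → List C) (M' M : Finset (A × C)) : Prop :=
  (∃ a, lexPrefers (pref a) (bundle M' a) (bundle M a)) ∧
    ∀ a, ¬ lexPrefers (pref a) (bundle M a) (bundle M' a)

def ParetoOptimal {A C : Type*} [DecidableEq A] [DecidableEq C]
    (pref : A → List C) (qA : A → ℕ) (qC : C → ℕ)
    (prereq : A → C → C → Prop) (M : Finset (A × C)) : Prop :=
  IsMatching pref qA qC prereq M ∧
    ∀ M', IsMatching pref qA qC prereq M' → ¬ Dominates pref M' M

/-- The matching `M_i`: applicant `a_i` is assigned the bundle
`{c_{n+1}, …, c_{2n}}` and no course is assigned to any other applicant. -/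
def Mi (n : ℕ) (i : Fin n) : Finset (Fin n × Fin (2 * n)) :=
  ({i} : Finset (Fin n)) ×ˢ (Finset.univ.filter fun j : Fin (2 * n) => n ≤ (j : ℕ))

/-!
A feasible bundle is an up-set of the chain `c_1 → ⋯ → c_{2n}` of size at most `n`, hence lies in
the upper half `{c_{n+1}, …, c_{2n}}`, and any two nonempty ones meet. Since
courses have capacity one, in a matching at most one applicant `a` holds anything. If `a` does not
hold the whole upper half, `M_a` gives her a strict superset, which she prefers lexicographically
while nobody else loses; conversely a matching that no applicant likes less than `M_i` must give
`a_i` the whole upper half, hence is `M_i` itself.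
-/

section Bundles

variable {A C : Type*} [DecidableEq A] [DecidableEq C]

@[simp]
lemma mem_bundle {M : Finset (A × C)} {a : A} {c : C} : c ∈ bundle M a ↔ (a, c) ∈ M := by
  simp [bundle]

lemma eq_of_bundle_eq {M M' : Finset (A × C)} (h : ∀ a, bundle M a = bundle M' a) : M = M' := by
  ext ⟨a, c⟩
  rw [← mem_bundle, ← mem_bundle, h a]

lemma disjoint_bundle_of_slots_le_one {M : Finset (A × C)} (hM : ∀ c, slots M c ≤ 1) {a b : A}
    (hab : a ≠ b) : Disjoint (bundle M a) (bundle M b) := by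
  refine Finset.disjoint_left.mpr fun c ha hb => (hM c).not_gt ?_
  exact Finset.one_lt_card.mpr
    ⟨(a, c), by simpa using ha, (b, c), by simpa using hb, by simp [hab]⟩

end Bundles

section LexPrefers

variable {C : Type*} [DecidableEq C] {l : List C} {S T : Finset C}

lemma not_lexPrefers_of_subset (h : S ⊆ T) : ¬ lexPrefers l S T := by
  rintro ⟨c, hc, -⟩
  exact (Finset.mem_sdiff.mp hc).2 (h (Finset.mem_sdiff.mp hc).1)

lemma lexPrefers_of_ssubset (h : S ⊂ T) : lexPrefers l T S := by
  obtain ⟨c, hc, hmin⟩ :=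
    (T \ S).exists_min_image l.idxOf (Finset.sdiff_nonempty.mpr h.not_subset)
  refine ⟨c, hc, fun d hd => hmin d ?_⟩
  simpa [Finset.sdiff_eq_empty_iff_subset.mpr h.subset] using hd

end LexPrefers

lemma Fin.le_val_add_card_of_isUpperSet {m : ℕ} {S : Finset (Fin m)}
    (hS : IsUpperSet (S : Set (Fin m))) {c : Fin m} (hc : c ∈ S) : m ≤ c + #S := by
  have hIci : Finset.Ici c ⊆ S := fun x hx => hS (Finset.mem_Ici.mp hx) hc
  have := Finset.card_le_card hIci
  rw [Fin.card_Ici] at this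
  omega

lemma Finset.not_disjoint_of_isUpperSet {α : Type*} [LinearOrder α] {S T : Finset α}
    (hS : IsUpperSet (S : Set α)) (hT : IsUpperSet (T : Set α)) (hS₀ : S.Nonempty)
    (hT₀ : T.Nonempty) : ¬ Disjoint S T := by
  rw [Finset.not_disjoint_iff_nonempty_inter]
  rcases hS.total hT with h | h
  · rwa [Finset.inter_eq_left.mpr (Finset.coe_subset.mp h)]
  · rwa [Finset.inter_eq_right.mpr (Finset.coe_subset.mp h)]

def upperHalf (n : ℕ) : Finset (Fin (2 * n)) :=
  Finset.univ.filter fun j : Fin (2 * n) => n ≤ (j : ℕ)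

lemma upperHalf_eq_Ici {n : ℕ} (hn : 0 < n) : upperHalf n = Finset.Ici ⟨n, by omega⟩ := by
  ext j
  simp [upperHalf, Fin.le_def]

lemma bundle_Mi {n : ℕ} (i a : Fin n) :
    bundle (Mi n i) a = if a = i then upperHalf n else ∅ := by
  ext c
  split_ifs with h
  · simp [Mi, upperHalf, h]
  · simp [Mi, Ne.symm h]

lemma eq_Mi_of_bundle_eq {n : ℕ} {M : Finset (Fin n × Fin (2 * n))} {a : Fin n}
    (hothers : ∀ b ≠ a, bundle M b = ∅) (ha : bundle M a = upperHalf n) : M = Mi n a :=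
  eq_of_bundle_eq fun b => by
    rw [bundle_Mi]
    split_ifs with hb
    · rw [hb, ha]
    · exact hothers b hb

lemma Mi_injective (n : ℕ) : Function.Injective (Mi n) := by
  intro i j h
  have hi : (i, (⟨n, by have := i.pos; omega⟩ : Fin (2 * n))) ∈ Mi n i := by simp [Mi]
  rw [h] at hi
  exact (by simpa [Mi] using hi : j = i).symm

abbrev IsChainMatching (n : ℕ) (M : Finset (Fin n × Fin (2 * n))) : Prop :=
  IsMatching (fun _ : Fin n => List.finRange (2 * n)) (fun _ => n) (fun _ => 1)
    (fun _ (c c' : Fin (2 * n)) => c < c') M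

namespace IsChainMatching

variable {n : ℕ} {M : Finset (Fin n × Fin (2 * n))}

lemma isUpperSet_bundle (hM : IsChainMatching n M) (a : Fin n) :
    IsUpperSet (bundle M a : Set (Fin (2 * n))) := fun c c' hle hc =>
  hle.eq_or_lt.elim (· ▸ hc) ((hM.1 a).2.2 c hc c')

lemma bundle_subset_upperHalf (hM : IsChainMatching n M) (a : Fin n) :
    bundle M a ⊆ upperHalf n := by
  intro c hc
  have := Fin.le_val_add_card_of_isUpperSet (hM.isUpperSet_bundle a) hc
  have hcard : #(bundle M a) ≤ n := (hM.1 a).2.1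
  simp only [upperHalf, Finset.mem_filter, Finset.mem_univ, true_and]
  omega

lemma bundle_eq_empty (hM : IsChainMatching n M) {a b : Fin n} (ha : (bundle M a).Nonempty)
    (hba : b ≠ a) : bundle M b = ∅ := by
  by_contra hb
  exact Finset.not_disjoint_of_isUpperSet (hM.isUpperSet_bundle b) (hM.isUpperSet_bundle a)
    (Finset.nonempty_iff_ne_empty.mpr hb) ha (disjoint_bundle_of_slots_le_one hM.2 hba)

lemma exists_bundle_eq_empty (hn : 0 < n) (hM : IsChainMatching n M) :
    ∃ a, ∀ b ≠ a, bundle M b = ∅ := by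
  by_cases h : ∃ a, (bundle M a).Nonempty
  · obtain ⟨a, ha⟩ := h
    exact ⟨a, fun b => hM.bundle_eq_empty ha⟩
  · simp only [not_exists, Finset.not_nonempty_iff_eq_empty] at h
    exact ⟨⟨0, hn⟩, fun b _ => h b⟩

lemma Mi_dominates (hM : IsChainMatching n M) {a : Fin n}
    (hothers : ∀ b ≠ a, bundle M b = ∅) (ha : bundle M a ≠ upperHalf n) :
    Dominates (fun _ : Fin n => List.finRange (2 * n)) (Mi n a) M := by
  refine ⟨⟨a, ?_⟩, fun b => ?_⟩
  · rw [bundle_Mi, if_pos rfl]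
    exact lexPrefers_of_ssubset (ssubset_of_subset_of_ne (hM.bundle_subset_upperHalf a) ha)
  · rw [bundle_Mi]
    split_ifs with hb
    · exact not_lexPrefers_of_subset (hb ▸ hM.bundle_subset_upperHalf a)
    · exact not_lexPrefers_of_subset (hothers b hb).subset

end IsChainMatching

lemma isChainMatching_Mi {n : ℕ} (i : Fin n) : IsChainMatching n (Mi n i) := by
  have hIci := upperHalf_eq_Ici i.pos
  refine ⟨fun a => ?_, fun c => ?_⟩
  · rw [IsFeasible, bundle_Mi]
    split_ifs
    · refine ⟨fun c _ => List.mem_finRange c, by simp [hIci]; omega, fun c hc c' hcc' => ?_⟩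
      rw [hIci, Finset.mem_Ici] at hc ⊢
      exact hc.trans hcc'.le
    · simp
  · calc slots (Mi n i) c ≤ #{(i, c)} :=
          Finset.card_le_card fun p hp => by
            simp only [Mi, Finset.mem_filter, Finset.mem_product, Finset.mem_singleton] at hp
            simp [Prod.ext_iff, hp.1.1, hp.2]
      _ = 1 := Finset.card_singleton _

lemma paretoOptimal_Mi {n : ℕ} (i : Fin n) :
    ParetoOptimal (fun _ : Fin n => List.finRange (2 * n)) (fun _ => n) (fun _ => 1)
      (fun _ (c c' : Fin (2 * n)) => c < c') (Mi n i) := by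
  refine ⟨isChainMatching_Mi i, fun M (hM : IsChainMatching n M) ⟨⟨a, hpref⟩, hworse⟩ => ?_⟩
  have hi : bundle M i = upperHalf n := by
    by_contra hne
    refine hworse i ?_
    rw [bundle_Mi, if_pos rfl]
    exact lexPrefers_of_ssubset (ssubset_of_subset_of_ne (hM.bundle_subset_upperHalf i) hne)
  have hupper : (upperHalf n).Nonempty := by simp [upperHalf_eq_Ici i.pos]
  rw [eq_Mi_of_bundle_eq (fun b => hM.bundle_eq_empty (hi ▸ hupper)) hi] at hpref
  exact not_lexPrefers_of_subset subset_rfl hpref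

/-- the CAPR instance with applicants `a_1, …, a_n`, each of capacity
`n`, and courses `c_1, …, c_{2n}`, each of capacity 1, where every applicant ranks
all courses in increasing indicial order and the prerequisites (identical for all
applicants) form the strict partial order generated by the chain
`c_1 → c_2 → … → c_{2n}`, i.e. `c_i → c_j` iff `i < j`.  Its Pareto optimal
matchings are exactly the `n` pairwise distinct matchings `M_1, …, M_n`, where in
`M_i` applicant `a_i` receives `{c_{n+1}, …, c_{2n}}` and everyone else nothing. -/
theorem capr_exactly_n_poms {n : ℕ} (hn : 0 < n) :
    (∀ M : Finset (Fin n × Fin (2 * n)),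
        ParetoOptimal
          (fun _ : Fin n => List.finRange (2 * n))
          (fun _ => n) (fun _ => 1)
          (fun _ (c c' : Fin (2 * n)) => c < c') M ↔
        ∃ i : Fin n, M = Mi n i) ∧
    Function.Injective (Mi n) := by
  refine ⟨fun M => ⟨fun ⟨(hM : IsChainMatching n M), hopt⟩ => ?_, ?_⟩, Mi_injective n⟩
  · obtain ⟨a, hothers⟩ := hM.exists_bundle_eq_empty hn
    refine ⟨a, eq_Mi_of_bundle_eq hothers ?_⟩
    by_contra ha
    exact hopt _ (isChainMatching_Mi a) (hM.Mi_dominates hothers ha)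
  · rintro ⟨i, rfl⟩
    exact paretoOptimal_Mi i
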